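/- arXiv:2007.13782 — 5 statements merged into one kernel-verified Lean document; each statement's English description precedes it below -/
import Mathlib

section
/- Let P' be a consistent neighborly path system in an induced subgraph G' of a graph G. Then P' can be extended to a consistent neighborly path system in G. -/
/-!
Add the vertices outside `G'` one at a time, each adjacent to the current vertex set `t`
(possible since `G` is connected). For the new vertex `x`, fix a neighbour `n ∈ t`. The path
from `x` to `v ∈ t` is the edge from `x` to `b`, followed by the chosen path from `b` to `v`,
where `b` is the last neighbour of `x` on the chosen path from `n` to `v`. Since every such
`b` is read off paths starting at the same vertex `n`, consistency of the old system makes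
the choice of `b` constant along the path from `b` to `v`, which is exactly what consistency
of the new paths needs. Paths into `x` come from the same construction applied to the
reversed system.
-/

open SimpleGraph

variable {V : Type*}

/-- Total weight of a walk: sum of the weights of its edges. -/
def walkWeight {G : SimpleGraph V} (w : Sym2 V → ℝ) {u v : V} (p : G.Walk u v) : ℝ :=
  (p.edges.map w).sum

/-- A path system: a choice of a simple path between every (ordered) pair of vertices. -/
def IsPathSystem (G : SimpleGraph V) (P : ∀ u v : V, G.Walk u v) : Prop :=
  ∀ u v, (P u v).IsPath

/-- Consistency: any subpath of a chosen path is itself a chosen path. -/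
def Consistent (G : SimpleGraph V) (P : ∀ u v : V, G.Walk u v) : Prop :=
  ∀ (u v x y : V) (r : G.Walk u x) (q : G.Walk x y) (s : G.Walk y v),
    P u v = r.append (q.append s) → q = P x y

/-- `w` induces `P`: every chosen path is a `w`-shortest path between its endpoints. -/
def Induces (G : SimpleGraph V) (w : Sym2 V → ℝ) (P : ∀ u v : V, G.Walk u v) : Prop :=
  ∀ (u v : V) (Q : G.Walk u v), Q.IsPath → walkWeight w (P u v) ≤ walkWeight w Q

/-- `w` strictly induces `P`: every chosen path is the unique `w`-shortest path. -/
def StrictlyInduces (G : SimpleGraph V) (w : Sym2 V → ℝ) (P : ∀ u v : V, G.Walk u v) : Prop :=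
  ∀ (u v : V) (Q : G.Walk u v), Q.IsPath → Q ≠ P u v →
    walkWeight w (P u v) < walkWeight w Q

/-- A graph is metrizable if every consistent path system in it is induced by a
positive edge weight function. -/
def Metrizable (G : SimpleGraph V) : Prop :=
  ∀ P : ∀ u v : V, G.Walk u v, IsPathSystem G P → Consistent G P →
    ∃ w : Sym2 V → ℝ, (∀ e ∈ G.edgeSet, 0 < w e) ∧ Induces G w P

/-- A graph is strictly metrizable if every consistent path system in it is strictly
induced by a positive edge weight function. -/
def StrictlyMetrizable (G : SimpleGraph V) : Prop :=
  ∀ P : ∀ u v : V, G.Walk u v, IsPathSystem G P → Consistent G P →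
    ∃ w : Sym2 V → ℝ, (∀ e ∈ G.edgeSet, 0 < w e) ∧ StrictlyInduces G w P

/-- A path system is neighborly if the chosen path between adjacent vertices is the
edge between them. -/
def Neighborly (G : SimpleGraph V) (P : ∀ u v : V, G.Walk u v) : Prop :=
  ∀ u v (h : G.Adj u v), P u v = Walk.cons h Walk.nil


namespace SimpleGraph.Walk

variable {G : SimpleGraph V}

theorem exists_eq_append_forall_mem_support {a c : V} (W : G.Walk a c) {p : V → Prop}
    (h : ∃ y ∈ W.support, p y) :
    ∃ b, p b ∧ ∃ (T : G.Walk a b) (S : G.Walk b c),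
      W = T.append S ∧ ∀ y ∈ S.support, p y → y = b := by
  induction W with
  | nil =>
    obtain ⟨y, hy, hpy⟩ := h
    rw [support_nil, List.mem_singleton] at hy
    subst hy
    exact ⟨y, hpy, nil, nil, rfl, by simp⟩
  | cons hadj W ih =>
    by_cases hW : ∃ y ∈ W.support, p y
    · obtain ⟨b, hb, T, S, rfl, hS⟩ := ih hW
      exact ⟨b, hb, cons hadj T, S, rfl, hS⟩
    · push Not at hW
      obtain ⟨y, hy, hpy⟩ := h
      rw [support_cons, List.mem_cons] at hy
      obtain rfl | hy := hy
      · refine ⟨y, hpy, nil, cons hadj W, rfl, fun z hz hpz => ?_⟩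
        rw [support_cons, List.mem_cons] at hz
        exact hz.resolve_right fun hz => hW z hz hpz
      · exact absurd hpy (hW y hy)

end SimpleGraph.Walk

section PathSystem

variable {G : SimpleGraph V}

theorem consistent_iff_split {P : ∀ u v : V, G.Walk u v} :
    Consistent G P ↔ ∀ (u v a : V) (r : G.Walk u a) (s : G.Walk a v),
      P u v = r.append s → r = P u a ∧ s = P a v := by
  refine ⟨fun h u v a r s hrs => ⟨?_, ?_⟩, fun h u v x y r q s hrqs => ?_⟩
  · exact h u v u a Walk.nil r s (by rwa [Walk.nil_append])
  · exact h u v a v r s Walk.nil (by rwa [Walk.append_nil])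
  · exact (h x v y q s (h u v x r _ hrqs).2.symm).1

def reverseSystem (P : ∀ u v : V, G.Walk u v) (u v : V) : G.Walk u v := (P v u).reverse

@[simp]
theorem reverseSystem_reverseSystem (P : ∀ u v : V, G.Walk u v) :
    reverseSystem (reverseSystem P) = P := by
  funext u v
  exact Walk.reverse_reverse _

structure IsConsistentPair (G : SimpleGraph V) (t : Set V) (P : ∀ u v : V, G.Walk u v)
    (u v : V) : Prop where
  isPath : (P u v).IsPath
  support_subset : ∀ y ∈ (P u v).support, y ∈ t
  split : ∀ (a : V) (r : G.Walk u a) (s : G.Walk a v), P u v = r.append s →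
    r = P u a ∧ s = P a v
  neighborly : ∀ h : G.Adj u v, P u v = Walk.cons h Walk.nil

/-- `P` restricted to `t` is a consistent neighborly path system of `G[t]`, with consistency
in the form of `consistent_iff_split`; the values of `P` outside `t × t` are arbitrary. -/
def IsConsistentOn (G : SimpleGraph V) (t : Set V) (P : ∀ u v : V, G.Walk u v) : Prop :=
  ∀ u ∈ t, ∀ v ∈ t, IsConsistentPair G t P u v

namespace IsConsistentPair

variable {t : Set V} {P : ∀ u v : V, G.Walk u v} {u v : V}

theorem self_eq_nil (h : IsConsistentPair G t P u v) : P u u = Walk.nil :=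
  (h.split u Walk.nil _ (Walk.nil_append _).symm).1.symm

theorem eq_append_of_mem (h : IsConsistentPair G t P u v) {a : V} (ha : a ∈ (P u v).support) :
    P u v = (P u a).append (P a v) := by
  obtain ⟨r, s, hrs⟩ := Walk.mem_support_iff_exists_append.mp ha
  obtain ⟨rfl, rfl⟩ := h.split a r s hrs
  exact hrs

theorem reverse (h : IsConsistentPair G t P u v) :
    IsConsistentPair G t (reverseSystem P) v u where
  isPath := h.isPath.reverse
  support_subset y hy := h.support_subset y (by simpa [reverseSystem] using hy)
  split a r s hrs := by
    have hsr : P u v = s.reverse.append r.reverse := by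
      rw [← Walk.reverse_append, ← hrs, reverseSystem, Walk.reverse_reverse]
    obtain ⟨hs, hr⟩ := h.split a _ _ hsr
    exact ⟨by rw [reverseSystem, ← hr, Walk.reverse_reverse],
      by rw [reverseSystem, ← hs, Walk.reverse_reverse]⟩
  neighborly hvu := by simp [reverseSystem, h.neighborly hvu.symm]

theorem mono (h : IsConsistentPair G t P u v) {t' : Set V} {P' : ∀ u v : V, G.Walk u v}
    (htt' : t ⊆ t') (hP : ∀ a ∈ t, ∀ b ∈ t, P' a b = P a b) :
    IsConsistentPair G t' P' u v := by
  have hu := h.support_subset u (P u v).start_mem_support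
  have hv := h.support_subset v (P u v).end_mem_support
  refine ⟨hP u hu v hv ▸ h.isPath, fun y hy => htt' (h.support_subset y (hP u hu v hv ▸ hy)),
    fun a r s hrs => ?_, fun hadj => (hP u hu v hv).trans (h.neighborly hadj)⟩
  rw [hP u hu v hv] at hrs
  have ha := h.support_subset a 
    (hrs ▸ Walk.support_subset_support_append_left _ _ r.end_mem_support)
  rw [hP u hu a ha, hP a ha v hv]
  exact h.split a r s hrs

end IsConsistentPair

theorem isConsistentPair_self {t : Set V} {P : ∀ u v : V, G.Walk u v} {u : V} (hu : u ∈ t)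
    (hP : P u u = Walk.nil) : IsConsistentPair G t P u u where
  isPath := hP ▸ Walk.IsPath.nil
  support_subset y hy := by rw [hP, Walk.support_nil, List.mem_singleton] at hy; exact hy ▸ hu
  split a r s hrs := by
    cases r with
    | nil => exact ⟨hP.symm, by simpa using hrs.symm⟩
    | cons => simpa [hP] using congrArg Walk.length hrs
  neighborly h := absurd h (G.loopless.irrefl u)

theorem IsConsistentOn.reverse {t : Set V} {P : ∀ u v : V, G.Walk u v}
    (h : IsConsistentOn G t P) : IsConsistentOn G t (reverseSystem P) :=
  fun u hu v hv => (h v hv u hu).reverse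

section LastNeighbor

variable {t : Set V} {Q : ∀ u v : V, G.Walk u v} {x n v b : V}

variable (G Q) in
def IsLastNeighbor (x n v b : V) : Prop :=
  b ∈ (Q n v).support ∧ G.Adj x b ∧ ∀ y ∈ (Q b v).support, G.Adj x y → y = b

theorem IsConsistentOn.exists_isLastNeighbor (hQ : IsConsistentOn G t Q) (hn : n ∈ t)
    (hv : v ∈ t) (hxn : G.Adj x n) : ∃ b, IsLastNeighbor G Q x n v b := by
  obtain ⟨b, hxb, T, S, hTS, hS⟩ :=
    (Q n v).exists_eq_append_forall_mem_support ⟨n, (Q n v).start_mem_support, hxn⟩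
  obtain ⟨-, rfl⟩ := (hQ n hn v hv).split b T S hTS
  exact ⟨b, hTS ▸ T.support_subset_support_append_left _ T.end_mem_support, hxb, hS⟩

theorem IsConsistentOn.isLastNeighbor_self (hQ : IsConsistentOn G t Q) (hv : v ∈ t)
    (hxv : G.Adj x v) : IsLastNeighbor G Q x n v v := by
  refine ⟨(Q n v).end_mem_support, hxv, fun y hy _ => ?_⟩
  simpa [(hQ v hv v hv).self_eq_nil] using hy

theorem IsConsistentOn.isLastNeighbor_of_mem_support (hQ : IsConsistentOn G t Q) (hn : n ∈ t)
    (hv : v ∈ t) (hb : IsLastNeighbor G Q x n v b) {a : V} (ha : a ∈ (Q b v).support) :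
    IsLastNeighbor G Q x n a b := by
  obtain ⟨hbnv, hxb, hlast⟩ := hb
  have hbt := (hQ n hn v hv).support_subset b hbnv
  have hbav := (hQ b hbt v hv).eq_append_of_mem ha
  have hnbv := (hQ n hn v hv).eq_append_of_mem hbnv
  rw [hbav, Walk.append_assoc] at hnbv
  have hnba := ((hQ n hn v hv).split a _ _ hnbv).1
  refine ⟨hnba ▸ Walk.support_subset_support_append_left _ _ (Q n b).end_mem_support, hxb,
    fun y hy hxy => hlast y ?_ hxy⟩
  exact hbav ▸ Walk.support_subset_support_append_left _ _ hy

theorem IsConsistentOn.isLastNeighbor_unique (hQ : IsConsistentOn G t Q) (hn : n ∈ t)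
    (hv : v ∈ t) {b' : V} (hb : IsLastNeighbor G Q x n v b) (hb' : IsLastNeighbor G Q x n v b') :
    b' = b := by
  obtain ⟨hbnv, hxb, hlast⟩ := hb
  obtain ⟨hb'nv, hxb', hlast'⟩ := hb'
  have hbt := (hQ n hn v hv).support_subset b hbnv
  have hnbv := (hQ n hn v hv).eq_append_of_mem hbnv
  rw [hnbv, Walk.mem_support_append_iff] at hb'nv
  rcases hb'nv with hb'nb | hb'bv
  · rw [(hQ n hn b hbt).eq_append_of_mem hb'nb, ← Walk.append_assoc] at hnbv
    have hb'bv := ((hQ n hn v hv).split b' _ _ hnbv).2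
    refine (hlast' b ?_ hxb).symm
    exact hb'bv ▸ Walk.support_subset_support_append_left _ _ (Q b' b).end_mem_support
  · exact hlast b' hb'bv hxb'

/-- The path from a new vertex `x` to `v ∈ t` will be the edge from `x` to `b v` followed by
the chosen path from `b v` to `v`. -/
structure IsExitMap (G : SimpleGraph V) (t : Set V) (Q : ∀ u v : V, G.Walk u v) (x : V)
    (b : V → V) : Prop where
  adj : ∀ v, G.Adj x (b v)
  mem : ∀ v ∈ t, b v ∈ t
  eq_of_mem_support : ∀ v ∈ t, ∀ a ∈ (Q (b v) v).support, b a = b v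
  eq_self : ∀ v ∈ t, G.Adj x v → b v = v

theorem IsConsistentOn.exists_isExitMap (hQ : IsConsistentOn G t Q) (hn : n ∈ t)
    (hxn : G.Adj x n) : ∃ b, IsExitMap G t Q x b := by
  have : ∀ v, ∃ b, G.Adj x b ∧ (v ∈ t → IsLastNeighbor G Q x n v b) := by
    intro v
    by_cases hv : v ∈ t
    · exact (hQ.exists_isLastNeighbor hn hv hxn).imp fun b hb => ⟨hb.2.1, fun _ => hb⟩
    · exact ⟨n, hxn, fun h => absurd h hv⟩
  choose b hxb hb using this
  refine ⟨b, hxb, fun v hv => (hQ n hn v hv).support_subset _ (hb v hv).1,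
    fun v hv a ha => ?_, fun v hv hxv => ?_⟩
  · have hbt := (hQ n hn v hv).support_subset _ (hb v hv).1
    have hat : a ∈ t := (hQ _ hbt v hv).support_subset a ha
    exact hQ.isLastNeighbor_unique hn hat (hQ.isLastNeighbor_of_mem_support hn hv (hb v hv) ha)
      (hb a hat)
  · exact hQ.isLastNeighbor_unique hn hv (hQ.isLastNeighbor_self hv hxv) (hb v hv)

end LastNeighbor

theorem IsConsistentOn.isConsistentPair_insert_of_isExitMap {t : Set V}
    {Q Q' : ∀ u v : V, G.Walk u v} {x : V} {b : V → V} (hQ : IsConsistentOn G t Q)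
    (hx : x ∉ t) (hb : IsExitMap G t Q x b) (hxx : Q' x x = Walk.nil)
    (hxv : ∀ v ∈ t, Q' x v = Walk.cons (hb.adj v) (Q (b v) v))
    (hQQ' : ∀ u ∈ t, ∀ v ∈ t, Q' u v = Q u v) {v : V} (hv : v ∈ insert x t) :
    IsConsistentPair G (insert x t) Q' x v := by
  obtain rfl | hv := hv
  · exact isConsistentPair_self (Set.mem_insert _ _) hxx
  have hout : ∀ a ∈ t, ∀ β (h : G.Adj x β), b a = β → Q' x a = Walk.cons h (Q β a) := by
    rintro a ha _ h rfl
    exact hxv a ha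
  have hbv := hQ (b v) (hb.mem v hv) v hv
  refine ⟨?_, fun y hy => ?_, fun a r s hrs => ?_, fun hxv' => ?_⟩
  · rw [hxv v hv, Walk.cons_isPath_iff]
    exact ⟨hbv.isPath, fun h => hx (hbv.support_subset x h)⟩
  · rw [hxv v hv, Walk.support_cons, List.mem_cons] at hy
    exact hy.imp id (hbv.support_subset y)
  · rw [hxv v hv] at hrs
    cases r with
    | nil => exact ⟨hxx.symm, ((hxv v hv).trans hrs).symm⟩
    | cons h r' =>
      obtain ⟨rfl, hrs⟩ := Walk.cons.inj hrs
      replace hrs := eq_of_heq hrs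
      have ha : a ∈ (Q (b v) v).support :=
        hrs ▸ Walk.support_subset_support_append_left _ _ r'.end_mem_support
      have hat := hbv.support_subset a ha
      obtain ⟨rfl, rfl⟩ := hbv.split a r' s hrs
      exact ⟨(hout a hat _ h (hb.eq_of_mem_support v hv a ha)).symm, (hQQ' a hat v hv).symm⟩
  · rw [hout v hv v hxv' (hb.eq_self v hv hxv'), (hQ v hv v hv).self_eq_nil]

theorem IsConsistentOn.exists_insert {t : Set V} {Q : ∀ u v : V, G.Walk u v} {x n : V}
    (hQ : IsConsistentOn G t Q) (hx : x ∉ t) (hn : n ∈ t) (hxn : G.Adj x n) :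
    ∃ Q', IsConsistentOn G (insert x t) Q' ∧ ∀ u ∈ t, ∀ v ∈ t, Q' u v = Q u v := by
  classical
  obtain ⟨b, hb⟩ := hQ.exists_isExitMap hn hxn
  -- Paths into `x` are the reversed paths out of `x` of the reversed system.
  obtain ⟨c, hc⟩ := hQ.reverse.exists_isExitMap hn hxn
  let Q' : ∀ u v : V, G.Walk u v := fun u v =>
    if hu : u = x then
      if hv : v = x then Walk.nil.copy hu.symm hv.symm
      else (Walk.cons (hb.adj v) (Q (b v) v)).copy hu.symm rfl
    else if hv : v = x then
      (Walk.cons (hc.adj u) (reverseSystem Q (c u) u)).reverse.copy rfl hv.symm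
    else Q u v
  have hne : ∀ u ∈ t, u ≠ x := fun u hu h => hx (h ▸ hu)
  have hxx : Q' x x = Walk.nil := by simp [Q']
  have hQQ' : ∀ u ∈ t, ∀ v ∈ t, Q' u v = Q u v := fun u hu v hv => by
    simp [Q', hne u hu, hne v hv]
  refine ⟨Q', fun u hu v hv => ?_, hQQ'⟩
  obtain rfl | hu := hu
  · exact hQ.isConsistentPair_insert_of_isExitMap hx hb hxx
      (fun v hv => by simp [Q', hne v hv]) hQQ' hv
  obtain rfl | hv := hv
  · have := hQ.reverse.isConsistentPair_insert_of_isExitMap (Q' := reverseSystem Q') hx hc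
      (by simp [reverseSystem, hxx]) (fun v hv => by simp [reverseSystem, Q', hne v hv])
      (fun u hu v hv => by simp [reverseSystem, hQQ' v hv u hu]) (Set.mem_insert_of_mem _ hu)
    simpa using this.reverse
  · exact (hQ u hu v hv).mono (Set.subset_insert _ _) hQQ'

theorem exists_isConsistentOn_singleton (Q : ∀ u v : V, G.Walk u v) (x : V) :
    ∃ Q' : ∀ u v : V, G.Walk u v, IsConsistentOn G {x} Q' := by
  classical
  refine ⟨fun u v => if h : u = v then Walk.nil.copy rfl h else Q u v, ?_⟩
  rintro u rfl v rfl
  exact isConsistentPair_self rfl (by simp)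

theorem IsConsistentOn.exists_insert_of_ne_univ (hG : G.Connected) {t : Set V}
    {Q : ∀ u v : V, G.Walk u v} (hQ : IsConsistentOn G t Q) (ht : t ≠ Set.univ) :
    ∃ x ∉ t, ∃ Q', IsConsistentOn G (insert x t) Q' ∧
      ∀ u ∈ t, ∀ v ∈ t, Q' u v = Q u v := by
  obtain ⟨y, hy⟩ := (Set.ne_univ_iff_exists_notMem t).mp ht
  obtain rfl | ⟨u, hu⟩ := t.eq_empty_or_nonempty
  · obtain ⟨Q', hQ'⟩ := exists_isConsistentOn_singleton Q y
    exact ⟨y, hy, Q', by simpa using hQ', by simp⟩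
  obtain ⟨d, -, hd, hd'⟩ := (hG.preconnected u y).some.exists_boundary_dart t hu hy
  exact ⟨d.snd, hd', hQ.exists_insert hd' hd d.adj.symm⟩

theorem IsConsistentOn.exists_univ [Finite V] (hG : G.Connected) {t : Set V}
    {Q : ∀ u v : V, G.Walk u v} (hQ : IsConsistentOn G t Q) :
    ∃ P, IsConsistentOn G Set.univ P ∧ ∀ u ∈ t, ∀ v ∈ t, P u v = Q u v := by
  by_cases ht : t = Set.univ
  · exact ⟨Q, ht ▸ hQ, fun _ _ _ _ => rfl⟩
  obtain ⟨x, hx, Q', hQ', hQ'Q⟩ := hQ.exists_insert_of_ne_univ hG ht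
  obtain ⟨P, hP, hPQ'⟩ := hQ'.exists_univ hG
  exact ⟨P, hP, fun u hu v hv => (hPQ' u (Set.mem_insert_of_mem _ hu) v
    (Set.mem_insert_of_mem _ hv)).trans (hQ'Q u hu v hv)⟩
termination_by tᶜ.ncard
decreasing_by
  exact Set.ncard_lt_ncard (compl_lt_compl_iff_lt.2 (Set.ssubset_insert hx))

theorem mem_of_mem_support_map_induce {s : Set V} {a b : s} (p : (G.induce s).Walk a b) {y : V}
    (hy : y ∈ (p.map (Embedding.induce s).toHom).support) : y ∈ s := by
  rw [Walk.support_map, List.mem_map] at hy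
  obtain ⟨z, -, rfl⟩ := hy
  exact z.2

theorem isConsistentOn_of_induce {s : Set V} {P' : ∀ u v : s, (G.induce s).Walk u v}
    (hpath : IsPathSystem (G.induce s) P') (hcons : Consistent (G.induce s) P')
    (hnbr : Neighborly (G.induce s) P') {Q : ∀ u v : V, G.Walk u v}
    (hQ : ∀ u v : s, Q u v = (P' u v).map (Embedding.induce s).toHom) :
    IsConsistentOn G s Q := by
  have hinj : Function.Injective (Embedding.induce (G := G) s).toHom := Subtype.val_injective
  intro u hu v hv
  have hQuv := hQ ⟨u, hu⟩ ⟨v, hv⟩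
  refine ⟨?_, fun y hy => ?_, fun a r r' hrr' => ?_, fun h => ?_⟩
  · rw [hQuv]
    exact (hpath _ _).map hinj
  · rw [hQuv] at hy
    exact mem_of_mem_support_map_induce _ hy
  · have hsub : ∀ y ∈ (r.append r').support, y ∈ s := fun y hy =>
      mem_of_mem_support_map_induce _ (hQuv ▸ hrr' ▸ hy)
    have hr : ∀ y ∈ r.support, y ∈ s := fun y hy =>
      hsub y (Walk.support_subset_support_append_left _ _ hy)
    have hr' : ∀ y ∈ r'.support, y ∈ s := fun y hy =>
      hsub y (Walk.support_subset_support_append_right _ _ hy)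
    have ha : a ∈ s := hr a r.end_mem_support
    have hlift : P' ⟨u, hu⟩ ⟨v, hv⟩ = (r.induce s hr).append (r'.induce s hr') := by
      refine Walk.map_injective_of_injective hinj _ _ ?_
      rw [Walk.map_append, Walk.map_induce, Walk.map_induce, ← hQuv]
      exact hrr'
    obtain ⟨h1, h2⟩ := consistent_iff_split.1 hcons _ _ ⟨a, ha⟩ _ _ hlift
    rw [hQ ⟨u, hu⟩ ⟨a, ha⟩, hQ ⟨a, ha⟩ ⟨v, hv⟩, ← h1, ← h2]
    exact ⟨(Walk.map_induce r hr).symm, (Walk.map_induce r' hr').symm⟩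
  · rw [hQuv, hnbr _ _ (show (G.induce s).Adj ⟨u, hu⟩ ⟨v, hv⟩ from h)]
    rfl

end PathSystem

/-- a consistent neighborly path system in an induced subgraph extends
to a consistent neighborly path system in the whole graph. -/
theorem neighborly_path_system_extends
    [Fintype V] (G : SimpleGraph V) (hconn : G.Connected) (s : Set V)
    (P' : ∀ u v : s, (G.induce s).Walk u v)
    (hpath : IsPathSystem (G.induce s) P')
    (hcons : Consistent (G.induce s) P')
    (hnbr : Neighborly (G.induce s) P') :
    ∃ P : ∀ u v : V, G.Walk u v,
      IsPathSystem G P ∧ Consistent G P ∧ Neighborly G P ∧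
      ∀ u v : s, P u v = (P' u v).map (Embedding.induce s).toHom := by
  classical
  let Q : ∀ u v : V, G.Walk u v := fun u v =>
    if h : u ∈ s ∧ v ∈ s then (P' ⟨u, h.1⟩ ⟨v, h.2⟩).map (Embedding.induce s).toHom
    else (hconn.preconnected u v).some
  have hQ : ∀ u v : s, Q u v = (P' u v).map (Embedding.induce s).toHom :=
    fun u v => dif_pos ⟨u.2, v.2⟩
  obtain ⟨P, hP, hPQ⟩ := (isConsistentOn_of_induce hpath hcons hnbr hQ).exists_univ hconn
  have hP' := fun u v => hP u (Set.mem_univ u) v (Set.mem_univ v)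
  exact ⟨P, fun u v => (hP' u v).isPath,
    consistent_iff_split.2 fun u v a r r' => (hP' u v).split a r r',
    fun u v => (hP' u v).neighborly, fun u v => (hPQ u u.2 v v.2).trans (hQ u v)⟩
end

section
/- Let T be a consistent tree system in a graph G with corresponding path system P, and let u, v be vertices. The following are equivalent: (1) T_u = T_v; (2) every tree T_w in the system contains the path P_{u,v}; (3) T_z = T_u for every vertex z on the path P_{u,v}. -/
open SimpleGraph

variable {V : Type*}

/-- A tree system: a spanning tree `T u` of `G` for every root `u`. -/
def IsTreeSystem (G : SimpleGraph V) (T : V → SimpleGraph V) : Prop :=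
  ∀ u, T u ≤ G ∧ (T u).IsTree

/-- Consistency of a tree system: for all `u v`, the `uv`-path in `T u` and the
`uv`-path in `T v` coincide (as edge lists). -/
def TreeConsistent (T : V → SimpleGraph V) : Prop :=
  ∀ (u v : V) (p : (T u).Walk u v) (q : (T v).Walk u v),
    p.IsPath → q.IsPath → p.edges = q.edges

/-!
If `T u = T v`, the `uv`-path of this tree is covered by its `uw`- and `wv`-paths, which by
consistency are the corresponding paths of `T w`; so every tree contains `P u v`.

Conversely, suppose the `T a`-path from `a` to `b` lies in every tree. For any `x`, the
`T a`-path from `a` to `x` is the `T x`-path, which is covered by the `ab`-path followed by the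
`T x`-path from `b` to `x`; the latter is the `T b`-path by consistency, so all these edges lie in
`T b`. Since every edge of a tree lies on a path from a fixed root, `T a ≤ T b`. Applied in both
directions to the initial segment from `u` to a vertex `z` of `P u v`, this gives `T z = T u`.
-/

namespace SimpleGraph

variable {H : SimpleGraph V}

lemma IsAcyclic.edges_subset_of_isPath (hH : H.IsAcyclic) {a b : V} {p : H.Walk a b}
    (hp : p.IsPath) (q : H.Walk a b) : p.edges ⊆ q.edges := by
  classical
  have hpq : p = q.bypass := congrArg Subtype.val <|
    (hH.subsingleton_path a b).elim ⟨p, hp⟩ ⟨q.bypass, q.bypass_isPath⟩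
  exact hpq ▸ q.edges_bypass_subset_edges

lemma IsTree.le_of_forall_isPath_edges_mem (hH : H.IsTree) (a : V) {H' : SimpleGraph V}
    (h : ∀ x (p : H.Walk a x), p.IsPath → ∀ e ∈ p.edges, e ∈ H'.edgeSet) : H ≤ H' := by
  intro x y hxy
  obtain ⟨px, hpx⟩ := hH.connected.exists_isPath a x
  obtain ⟨py, hpy⟩ := hH.connected.exists_isPath a y
  have hmem := isBridge_iff_forall_walk_mem_edges.mp
    (isAcyclic_iff_forall_adj_isBridge.mp hH.isAcyclic hxy) (px.reverse.append py)
  rw [Walk.edges_append, Walk.edges_reverse, List.mem_append, List.mem_reverse] at hmem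
  exact hmem.elim (h x px hpx _) (h y py hpy _)

end SimpleGraph

namespace TreeConsistent

variable {T : V → SimpleGraph V}

lemma edges_mem_edgeSet_right (hcons : TreeConsistent T) (htree : ∀ t, (T t).IsTree)
    {a b : V} {p : (T a).Walk a b} (hp : p.IsPath) : ∀ e ∈ p.edges, e ∈ (T b).edgeSet := by
  obtain ⟨q, hq⟩ := (htree b).connected.exists_isPath a b
  rw [hcons a b p q hp hq]
  exact q.edges_subset_edgeSet

lemma edges_mem_edgeSet_left (hcons : TreeConsistent T) (htree : ∀ t, (T t).IsTree)
    {a b : V} {p : (T b).Walk a b} (hp : p.IsPath) : ∀ e ∈ p.edges, e ∈ (T a).edgeSet := by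
  obtain ⟨q, hq⟩ := (htree a).connected.exists_isPath a b
  rw [← hcons a b q p hq hp]
  exact q.edges_subset_edgeSet

lemma edges_mem_edgeSet_of_eq (hcons : TreeConsistent T) (htree : ∀ t, (T t).IsTree)
    {u v : V} (huv : T u = T v) {p : (T u).Walk u v} (hp : p.IsPath) (w : V) :
    ∀ e ∈ p.edges, e ∈ (T w).edgeSet := by
  obtain ⟨q, hq⟩ := (htree u).connected.exists_isPath u w
  obtain ⟨r, hr⟩ := (htree v).connected.exists_isPath w v
  intro e he
  have hmem := (htree u).isAcyclic.edges_subset_of_isPath hp (q.append (r.mapLe huv.ge)) he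
  rw [Walk.edges_append, Walk.edges_mapLe_eq_edges, List.mem_append] at hmem
  exact hmem.elim (hcons.edges_mem_edgeSet_right htree hq e)
    (hcons.edges_mem_edgeSet_left htree hr e)

lemma le_of_forall_edges_mem (hcons : TreeConsistent T) (htree : ∀ t, (T t).IsTree)
    {a b : V} {p : (T a).Walk a b} (hp_mem : ∀ w, ∀ e ∈ p.edges, e ∈ (T w).edgeSet) :
    T a ≤ T b := by
  refine (htree a).le_of_forall_isPath_edges_mem a fun x s hs e he => ?_
  obtain ⟨s', hs'⟩ := (htree x).connected.exists_isPath a x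
  obtain ⟨r, hr⟩ := (htree x).connected.exists_isPath b x
  rw [hcons a x s s' hs hs'] at he
  have hmem := (htree x).isAcyclic.edges_subset_of_isPath hs'
    ((p.transfer (T x) (hp_mem x)).append r) he
  rw [Walk.edges_append, Walk.edges_transfer, List.mem_append] at hmem
  exact hmem.elim (hp_mem b e) (hcons.edges_mem_edgeSet_left htree hr e)

lemma eq_of_mem_support (hcons : TreeConsistent T) (htree : ∀ t, (T t).IsTree)
    {u v : V} {p : (T u).Walk u v} (hp : p.IsPath)
    (hp_mem : ∀ w, ∀ e ∈ p.edges, e ∈ (T w).edgeSet) {z : V} (hz : z ∈ p.support) :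
    T z = T u := by
  classical
  have hpre_mem : ∀ w, ∀ e ∈ (p.takeUntil z hz).edges, e ∈ (T w).edgeSet :=
    fun w e he => hp_mem w e (p.edges_takeUntil_subset_edges hz he)
  obtain ⟨q, hq⟩ := (htree z).connected.exists_isPath z u
  have hq_mem : ∀ w, ∀ e ∈ q.edges, e ∈ (T w).edgeSet := by
    intro w e he
    rw [hcons z u q _ hq (hp.takeUntil hz).reverse, Walk.edges_reverse, List.mem_reverse] at he
    exact hpre_mem w e he
  exact le_antisymm (hcons.le_of_forall_edges_mem htree hq_mem)
    (hcons.le_of_forall_edges_mem htree hpre_mem)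

theorem tfae (hcons : TreeConsistent T) (htree : ∀ t, (T t).IsTree)
    {u v : V} {p : (T u).Walk u v} (hp : p.IsPath) :
    [T u = T v,
     ∀ w, ∀ e ∈ p.edges, e ∈ (T w).edgeSet,
     ∀ z ∈ p.support, T z = T u].TFAE := by
  tfae_have 1 → 2 := fun huv => hcons.edges_mem_edgeSet_of_eq htree huv hp
  tfae_have 2 → 3 := fun h _ hz => hcons.eq_of_mem_support htree hp h hz
  tfae_have 3 → 1 := fun h => (h v p.end_mem_support).symm
  tfae_finish

end TreeConsistent

theorem tree_system_tfae_general
    (G : SimpleGraph V)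
    (T : V → SimpleGraph V) (hT : IsTreeSystem G T) (hTcons : TreeConsistent T)
    (P : ∀ u v : V, G.Walk u v)
    (hcorr : ∀ u v, ∃ p : (T u).Walk u v, p.IsPath ∧ p.edges = (P u v).edges)
    (u v : V) :
    [T u = T v,
     ∀ w : V, ∀ e ∈ (P u v).edges, e ∈ (T w).edgeSet,
     ∀ z ∈ (P u v).support, T z = T u].TFAE := by
  obtain ⟨p, hp, hpP⟩ := hcorr u v
  have hsupport : ∀ z, z ∈ (P u v).support ↔ z ∈ p.support := fun z => by
    simp only [Walk.mem_support_iff_exists_mem_edges, hpP]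
  simp_rw [← hpP, hsupport]
  exact hTcons.tfae (fun t => (hT t).2) hp

/-- for a consistent tree system with corresponding path system,
`T u = T v` iff every tree contains `P u v` iff `T z = T u` for every `z` on `P u v`. -/
theorem tree_system_tfae
    [Fintype V] (G : SimpleGraph V) (hconn : G.Connected)
    (T : V → SimpleGraph V) (hT : IsTreeSystem G T) (hTcons : TreeConsistent T)
    (P : ∀ u v : V, G.Walk u v) (hP : IsPathSystem G P)
    (hcorr : ∀ u v, ∃ p : (T u).Walk u v, p.IsPath ∧ p.edges = (P u v).edges)
    (u v : V) :
    [T u = T v,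
     ∀ w : V, ∀ e ∈ (P u v).edges, e ∈ (T w).edgeSet,
     ∀ z ∈ (P u v).support, T z = T u].TFAE :=
  tree_system_tfae_general G T hT hTcons P hcorr u v
end

section
/- The Petersen graph is not metrizable: there exists a consistent path system in the Petersen graph that is not induced by any positive edge weight function. -/
open SimpleGraph

variable {V : Type*}

/-- The Petersen graph: outer 5-cycle `0..4`, spokes `i — i+5`, inner 5-cycle
`5 — 7 — 9 — 6 — 8 — 5`. -/
def petersenGraph : SimpleGraph (Fin 10) :=
  SimpleGraph.fromRel (fun a b =>
    (a.val < 5 ∧ b.val < 5 ∧ b.val = (a.val + 1) % 5) ∨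
    (a.val < 5 ∧ b.val = a.val + 5) ∨
    (5 ≤ a.val ∧ 5 ≤ b.val ∧ b.val = 5 + (a.val - 5 + 2) % 5))

/-!
Route each pair of distinct non-adjacent vertices through their unique common neighbour,
except that for each outer vertex `i` the pair `(i, (i + 1) + 5)` (outer indices mod 5) takes
the three-edge detour `i, i - 1, (i - 1) + 5, (i + 1) + 5`. Every proper subpath of a detour
is an edge or a two-edge path through a common neighbour, so the system is consistent.
If positive weights induced it, each detour would weigh at most the two-edge path
`i, i + 1, (i + 1) + 5` it avoids. Summing these five inequalities, every outer edge and every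
spoke cancels, and the inner 5-cycle would have weight at most `0`.
-/

open SimpleGraph

namespace SimpleGraph.Walk

variable [DecidableEq V] {G : SimpleGraph V} [DecidableRel G.Adj]

def ofList? : (u v : V) → List V → Option (G.Walk u v)
  | u, v, [] => if h : u = v then some (nil.copy rfl h) else none
  | u, v, a :: l => if h : G.Adj u a then (ofList? a v l).map (cons h) else none

theorem support_eq_of_ofList?_eq_some :
    ∀ {u v : V} {l : List V} {p : G.Walk u v}, ofList? u v l = some p → p.support = u :: l
  | u, v, [], p, h => by
    unfold ofList? at h
    split at h
    · subst_vars
      cases h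
      simp
    · cases h
  | u, v, a :: l, p, h => by
    unfold ofList? at h
    split at h
    · obtain ⟨q, hq, rfl⟩ := Option.map_eq_some_iff.mp h
      rw [support_cons, support_eq_of_ofList?_eq_some hq]
    · cases h

end SimpleGraph.Walk

section PathSystem

variable {G : SimpleGraph V} {P : ∀ u v : V, G.Walk u v}

theorem consistent_of_support_infix
    (hP : ∀ u v x y (l : List V), l <:+: (P u v).support → l.head? = some x →
      l.getLast? = some y → (P x y).support = l) :
    Consistent G P := by
  intro u v x y r q s h
  have hsub : q.IsSubwalk (P u v) := ⟨r, s, by rw [h, Walk.append_assoc]⟩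
  refine Walk.ext_support (hP u v x y _ (Walk.isSubwalk_iff_support_isInfix.mp hsub) ?_ ?_).symm
  · rw [← q.cons_tail_support, List.head?_cons]
  · rw [List.getLast?_eq_some_getLast q.support_ne_nil, Walk.getLast_support]

theorem Induces.walkWeight_le_of_adj {w : Sym2 V → ℝ} (hP : Induces G w P) {u x v : V}
    (hux : G.Adj u x) (hxv : G.Adj x v) (huv : u ≠ v) :
    walkWeight w (P u v) ≤ w s(u, x) + w s(x, v) := by
  have hpath : (Walk.cons hux hxv.toWalk).IsPath := by
    simp [Walk.cons_isPath_iff, huv, hux.ne, hxv.ne]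
  simpa [walkWeight] using hP u v _ hpath

end PathSystem

namespace Petersen

instance : DecidableRel petersenGraph.Adj :=
  fun a b => decidable_of_iff _ (fromRel_adj _ a b).symm

def detour : Fin 10 → Fin 10 → Option (List (Fin 10))
  | 1, 7 => some [0, 5, 7] | 7, 1 => some [5, 0, 1]
  | 2, 8 => some [1, 6, 8] | 8, 2 => some [6, 1, 2]
  | 3, 9 => some [2, 7, 9] | 9, 3 => some [7, 2, 3]
  | 4, 5 => some [3, 8, 5] | 5, 4 => some [8, 3, 4]
  | 0, 6 => some [4, 9, 6] | 6, 0 => some [9, 4, 0]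
  | _, _ => none

/-- The vertices after `u` on the chosen path from `u` to `v`. -/
def route (u v : Fin 10) : List (Fin 10) :=
  if u = v then []
  else if petersenGraph.Adj u v then [v]
  else (detour u v).getD
    -- non-adjacent vertices of the Petersen graph have exactly one common neighbour
    ((List.finRange 10).filter (fun m => petersenGraph.Adj u m ∧ petersenGraph.Adj m v) ++ [v])

theorem isSome_ofList?_route (u v : Fin 10) :
    (Walk.ofList? u v (route u v) : Option (petersenGraph.Walk u v)).isSome := by
  revert u v
  decide

def paths (u v : Fin 10) : petersenGraph.Walk u v :=
  (Walk.ofList? u v (route u v)).get (isSome_ofList?_route u v)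

theorem support_paths (u v : Fin 10) : (paths u v).support = u :: route u v :=
  Walk.support_eq_of_ofList?_eq_some (Option.some_get _).symm

theorem isPathSystem_paths : IsPathSystem petersenGraph paths := by
  intro u v
  refine Walk.IsPath.mk' ?_
  rw [support_paths]
  revert u v
  decide

theorem consistent_paths : Consistent petersenGraph paths := by
  refine consistent_of_support_infix fun u v x y l hl hx hy => ?_
  obtain ⟨t, hlt, htl⟩ := List.infix_iff_prefix_suffix.mp hl
  rw [support_paths] at htl ⊢
  rw [← List.mem_inits] at hlt
  rw [← List.mem_tails] at htl
  have infixes_chosen : ∀ u v : Fin 10, ∀ t ∈ (u :: route u v).tails, ∀ l ∈ t.inits,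
      ∀ x ∈ l.head?, ∀ y ∈ l.getLast?, x :: route x y = l := by
    decide
  exact infixes_chosen u v t htl l hlt x hx y hy

theorem edges_paths_detour :
    (paths 1 7).edges = [s(1, 0), s(0, 5), s(5, 7)] ∧
    (paths 2 8).edges = [s(2, 1), s(1, 6), s(6, 8)] ∧
    (paths 3 9).edges = [s(3, 2), s(2, 7), s(7, 9)] ∧
    (paths 4 5).edges = [s(4, 3), s(3, 8), s(8, 5)] ∧
    (paths 0 6).edges = [s(0, 4), s(4, 9), s(9, 6)] := by
  decide

theorem not_induces_paths {w : Sym2 (Fin 10) → ℝ}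
    (hw : ∀ e ∈ petersenGraph.edgeSet, 0 < w e) : ¬ Induces petersenGraph w paths := by
  intro hP
  have h₁ : walkWeight w (paths 1 7) ≤ w s(1, 2) + w s(2, 7) :=
    hP.walkWeight_le_of_adj (by decide) (by decide) (by decide)
  have h₂ : walkWeight w (paths 2 8) ≤ w s(2, 3) + w s(3, 8) :=
    hP.walkWeight_le_of_adj (by decide) (by decide) (by decide)
  have h₃ : walkWeight w (paths 3 9) ≤ w s(3, 4) + w s(4, 9) :=
    hP.walkWeight_le_of_adj (by decide) (by decide) (by decide)
  have h₄ : walkWeight w (paths 4 5) ≤ w s(4, 0) + w s(0, 5) :=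
    hP.walkWeight_le_of_adj (by decide) (by decide) (by decide)
  have h₅ : walkWeight w (paths 0 6) ≤ w s(0, 1) + w s(1, 6) :=
    hP.walkWeight_le_of_adj (by decide) (by decide) (by decide)
  obtain ⟨e₁, e₂, e₃, e₄, e₅⟩ := edges_paths_detour
  simp only [walkWeight, e₁, e₂, e₃, e₄, e₅, List.map_cons, List.map_nil, List.sum_cons,
    List.sum_nil, add_zero] at h₁ h₂ h₃ h₄ h₅
  have inner : 0 < w s(5, 7) + w s(7, 9) + w s(9, 6) + w s(6, 8) + w s(8, 5) := by
    have := hw s(5, 7) (by decide)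
    have := hw s(7, 9) (by decide)
    have := hw s(9, 6) (by decide)
    have := hw s(6, 8) (by decide)
    have := hw s(8, 5) (by decide)
    linarith
  simp only [Sym2.eq_swap] at h₁ h₂ h₃ h₄ h₅ inner
  linarith

end Petersen

/-- the Petersen graph is not metrizable: it carries a consistent path
system that is not induced by any positive edge weight function. -/
theorem petersen_not_metrizable :
    ∃ P : ∀ u v : Fin 10, petersenGraph.Walk u v,
      IsPathSystem petersenGraph P ∧ Consistent petersenGraph P ∧
      ∀ w : Sym2 (Fin 10) → ℝ, (∀ e ∈ petersenGraph.edgeSet, 0 < w e) →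
        ¬ Induces petersenGraph w P :=
  ⟨Petersen.paths, Petersen.isPathSystem_paths, Petersen.consistent_paths,
    fun _ => Petersen.not_induces_paths⟩
end

section
/- The graph obtained from two disjoint triangles x1x2x3 and y1y2y3 by adding a perfect matching x_i y_i (the 3-prism) admits a consistent path system that is metrizable but not strictly metrizable: it is induced by the constant weight function, but no positive weight function induces it with all chosen paths unique shortest paths. -/
open SimpleGraph

variable {V : Type*}

/-- The 3-prism: two triangles `{0,1,2}` (the `x_i`) and `{3,4,5}` (the `y_i`)
joined by the perfect matching `i — i+3`. -/
def prismGraph : SimpleGraph (Fin 6) :=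
  SimpleGraph.fromRel (fun a b =>
    (a.val < 3 ∧ b.val < 3 ∧ b.val = (a.val + 1) % 3) ∨
    (3 ≤ a.val ∧ 3 ≤ b.val ∧ b.val = 3 + (a.val - 3 + 1) % 3) ∨
    (b.val = a.val + 3))

/-! The path system consists of the trivial walks, the edges and, for each non-adjacent pair,
the two-edge path through a chosen midpoint. All its paths have length at most two, so it is
consistent and its paths are shortest for unit weights. If a weight function `w` induced it
strictly, comparing `x_i y_i y_{i+1}` with `x_i x_{i+1} y_{i+1}` and `y_i x_i x_{i+1}` with
`y_i y_{i+1} x_{i+1}` and adding would give `w(x_i y_i) < w(x_{i+1} y_{i+1})` for every `i`,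
which is absurd around the cycle `i = 0, 1, 2`. -/

section MidpointPathSystem

variable {G : SimpleGraph V}

lemma walkWeight_cons_toWalk (w : Sym2 V → ℝ) {u m v : V} (hum : G.Adj u m) (hmv : G.Adj m v) :
    walkWeight w (Walk.cons hum hmv.toWalk) = w s(u, m) + w s(m, v) := by
  simp [walkWeight]

lemma walkWeight_one {u v : V} (p : G.Walk u v) : walkWeight (fun _ => 1) p = p.length := by
  simp [walkWeight, List.map_const', List.sum_replicate]

lemma SimpleGraph.Walk.two_le_length {u v : V} (p : G.Walk u v) (huv : u ≠ v)
    (hnadj : ¬ G.Adj u v) : 2 ≤ p.length := by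
  by_contra! h
  interval_cases hp : p.length
  · exact huv (Walk.eq_of_length_eq_zero hp)
  · exact hnadj (Walk.adj_of_length_eq_one hp)

variable [DecidableEq V] [DecidableRel G.Adj] (mid : V → V → V)
  (hmid : ∀ u v, u ≠ v → ¬ G.Adj u v → G.Adj u (mid u v) ∧ G.Adj (mid u v) v)

def midpointPathSystem (u v : V) : G.Walk u v :=
  if huv : u = v then Walk.nil.copy rfl huv
  else if hadj : G.Adj u v then hadj.toWalk
  else Walk.cons (hmid u v huv hadj).1 (hmid u v huv hadj).2.toWalk

lemma midpointPathSystem_self (u : V) : midpointPathSystem mid hmid u u = .nil := by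
  simp [midpointPathSystem]

lemma midpointPathSystem_of_adj {u v : V} (h : G.Adj u v) :
    midpointPathSystem mid hmid u v = h.toWalk := by
  simp [midpointPathSystem, h.ne, h]

lemma midpointPathSystem_of_not_adj {u v : V} (huv : u ≠ v) (hnadj : ¬ G.Adj u v) :
    midpointPathSystem mid hmid u v =
      Walk.cons (hmid u v huv hnadj).1 (hmid u v huv hnadj).2.toWalk := by
  simp [midpointPathSystem, huv, hnadj]

lemma length_midpointPathSystem_le_two (u v : V) :
    (midpointPathSystem mid hmid u v).length ≤ 2 := by
  unfold midpointPathSystem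
  split_ifs <;> simp

lemma isPathSystem_midpointPathSystem : IsPathSystem G (midpointPathSystem mid hmid) := by
  intro u v
  by_cases huv : u = v
  · subst huv
    rw [midpointPathSystem_self]
    exact .nil
  by_cases hadj : G.Adj u v
  · rw [midpointPathSystem_of_adj mid hmid hadj]
    exact hadj.isPath_toWalk
  · obtain ⟨hum, hmv⟩ := hmid u v huv hadj
    rw [midpointPathSystem_of_not_adj mid hmid huv hadj]
    simp [Walk.cons_isPath_iff, huv, hum.ne, hmv.ne]

lemma eq_midpointPathSystem_of_length_le_one {x y : V} (q : G.Walk x y) (hq : q.length ≤ 1) :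
    q = midpointPathSystem mid hmid x y := by
  match q, hq with
  | .nil, _ => exact (midpointPathSystem_self mid hmid x).symm
  | .cons h .nil, _ => exact (midpointPathSystem_of_adj mid hmid h).symm

lemma consistent_midpointPathSystem : Consistent G (midpointPathSystem mid hmid) := by
  intro u v x y r q s hP
  have hlen : r.length + q.length + s.length ≤ 2 := by
    simpa [hP, add_assoc] using length_midpointPathSystem_le_two mid hmid u v
  cases r with
  | cons _ _ => exact eq_midpointPathSystem_of_length_le_one mid hmid q (by simp at hlen; omega)
  | nil =>
    cases s with
    | cons _ _ => exact eq_midpointPathSystem_of_length_le_one mid hmid q (by simp at hlen; omega)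
    | nil => simpa using hP.symm

lemma induces_one_midpointPathSystem : Induces G (fun _ => 1) (midpointPathSystem mid hmid) := by
  intro u v Q _
  rw [walkWeight_one, walkWeight_one, Nat.cast_le]
  by_cases huv : u = v
  · subst huv
    simp [midpointPathSystem_self]
  by_cases hadj : G.Adj u v
  · simpa [midpointPathSystem_of_adj mid hmid hadj] using
      Nat.one_le_iff_ne_zero.2 fun h => huv (Walk.eq_of_length_eq_zero h)
  · exact (length_midpointPathSystem_le_two mid hmid u v).trans (Q.two_le_length huv hadj)

lemma StrictlyInduces.weight_midpoint_lt {w : Sym2 V → ℝ}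
    (hw : StrictlyInduces G w (midpointPathSystem mid hmid)) {u v m : V} (huv : u ≠ v)
    (hnadj : ¬ G.Adj u v) (hum : G.Adj u m) (hmv : G.Adj m v) (hm : m ≠ mid u v) :
    w s(u, mid u v) + w s(mid u v, v) < w s(u, m) + w s(m, v) := by
  have hpath : (Walk.cons hum hmv.toWalk).IsPath := by
    simp [Walk.cons_isPath_iff, huv, hum.ne, hmv.ne]
  have hne : Walk.cons hum hmv.toWalk ≠ midpointPathSystem mid hmid u v := by
    rw [midpointPathSystem_of_not_adj mid hmid huv hnadj]
    intro h
    exact hm (congrArg (·.getVert 1) h)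
  simpa [midpointPathSystem_of_not_adj mid hmid huv hnadj, walkWeight_cons_toWalk] using
    hw u v _ hpath hne

end MidpointPathSystem

instance : DecidableRel prismGraph.Adj :=
  inferInstanceAs (DecidableRel (SimpleGraph.fromRel _).Adj)

namespace Prism

def x (i : Fin 3) : Fin 6 := Fin.castAdd 3 i

def y (i : Fin 3) : Fin 6 := Fin.natAdd 3 i

/-- The midpoint of a non-adjacent pair `{x_i, y_j}` is the matching partner of whichever
endpoint comes first in the cyclic order of the indices, which gives
`P_{x_i, y_{i+1}} = x_i y_i y_{i+1}` and `P_{y_i, x_{i+1}} = y_i x_i x_{i+1}`. -/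
def mid (u v : Fin 6) : Fin 6 :=
  if v.val % 3 = (u.val + 1) % 3 then u + 3 else v + 3

lemma adj_mid : ∀ u v, u ≠ v → ¬ prismGraph.Adj u v →
    prismGraph.Adj u (mid u v) ∧ prismGraph.Adj (mid u v) v := by
  decide

abbrev pathSystem : ∀ u v : Fin 6, prismGraph.Walk u v :=
  midpointPathSystem mid adj_mid

lemma adj_x_x_succ : ∀ i, prismGraph.Adj (x i) (x (i + 1)) := by decide

lemma adj_y_y_succ : ∀ i, prismGraph.Adj (y i) (y (i + 1)) := by decide

lemma adj_x_y : ∀ i, prismGraph.Adj (x i) (y i) := by decide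

lemma x_ne_y : ∀ i j, x i ≠ y j := by decide

lemma not_adj_x_y_succ : ∀ i, ¬ prismGraph.Adj (x i) (y (i + 1)) := by decide

lemma not_adj_y_x_succ : ∀ i, ¬ prismGraph.Adj (y i) (x (i + 1)) := by decide

lemma mid_x_y_succ : ∀ i, mid (x i) (y (i + 1)) = y i := by decide

lemma mid_y_x_succ : ∀ i, mid (y i) (x (i + 1)) = x i := by decide

lemma matching_weight_lt {w : Sym2 (Fin 6) → ℝ} (hw : StrictlyInduces prismGraph w pathSystem)
    (i : Fin 3) : w s(x i, y i) < w s(x (i + 1), y (i + 1)) := by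
  have hxy := hw.weight_midpoint_lt mid adj_mid (x_ne_y i (i + 1)) (not_adj_x_y_succ i)
    (adj_x_x_succ i) (adj_x_y (i + 1)) (by rw [mid_x_y_succ]; exact x_ne_y _ _)
  have hyx := hw.weight_midpoint_lt mid adj_mid (x_ne_y (i + 1) i).symm (not_adj_y_x_succ i)
    (adj_y_y_succ i) (adj_x_y (i + 1)).symm (by rw [mid_y_x_succ]; exact (x_ne_y _ _).symm)
  rw [mid_x_y_succ] at hxy
  rw [mid_y_x_succ, Sym2.eq_swap (a := y i) (b := x i),
    Sym2.eq_swap (a := y (i + 1)) (b := x (i + 1))] at hyx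
  linarith

end Prism

/-- the 3-prism admits a consistent path system that is induced by the
constant weight function but is not strictly induced by any positive weight function. -/
theorem prism_metrizable_not_strictly :
    ∃ P : ∀ u v : Fin 6, prismGraph.Walk u v,
      IsPathSystem prismGraph P ∧ Consistent prismGraph P ∧
      Induces prismGraph (fun _ => 1) P ∧
      ∀ w : Sym2 (Fin 6) → ℝ, (∀ e ∈ prismGraph.edgeSet, 0 < w e) →
        ¬ StrictlyInduces prismGraph w P := by
  refine ⟨Prism.pathSystem, isPathSystem_midpointPathSystem _ _,
    consistent_midpointPathSystem _ _, induces_one_midpointPathSystem _ _, fun w _ hw => ?_⟩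
  have h := Prism.matching_weight_lt hw
  exact lt_irrefl _ (((h 0).trans (h 1)).trans (h 2))
end

section
/- Let f : V → E be the crossing function of a consistent path system P in the cycle C_n (n ≥ 3). A nonnegative weight function w strictly induces P if and only if for every vertex x with f(x) = a_x b_x, the inequality |w(P_{x,a_x}) − w(P_{x,b_x})| < w(a_x b_x) holds. -/
/-
Between two distinct vertices of `C_n` there are exactly two paths, the two arcs, and their
weights add up to the weight `W` of the whole cycle. Hence `w` strictly induces `P` iff every
chosen path weighs less than `W / 2`. Seen from `x`, the chosen path `P x v` is the arc avoiding
`f x = s(a, b)`, so its weight increases as `v` runs from `x` to `a` one way round and from `x` to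
`b` the other way round: the binding constraints are `2 w(P x a) < W` and `2 w(P x b) < W`. Since
`w(P x a) + w(s(a, b)) + w(P x b) = W`, these two say `|w(P x a) - w(P x b)| < w(s(a, b))`.
-/

open SimpleGraph

variable {V : Type*}

open Finset
open scoped Fin.NatCast Fin.CommRing

namespace Fin

variable {n : ℕ} [NeZero n]

lemma add_eq_zero_or_eq_of_natCast_add_natCast_eq_zero {a b : ℕ} (ha : a < n) (hb : b < n)
    (h : (a : Fin n) + b = 0) : a + b = 0 ∨ a + b = n := by
  rw [← Nat.cast_add, natCast_eq_zero] at h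
  obtain ⟨c, hc⟩ := h
  have : c < 2 := by nlinarith
  interval_cases c <;> simp_all

lemma eq_of_nsmul_eq_nsmul {d : Fin n} (hd : d = 1 ∨ d = -1) {i j : ℕ} (hi : i < n) (hj : j < n)
    (h : i • d = j • d) : i = j := by
  refine CharP.natCast_injOn_Iio (Fin n) n hi hj ?_
  rcases hd with rfl | rfl <;> simpa using h

lemma forall_ne_iff_forall_add_natCast {p : Fin n → Prop} (u : Fin n) :
    (∀ v, u ≠ v → p v) ↔ ∀ t : ℕ, 0 < t → t < n → p (u + t) := by
  constructor
  · intro h t ht0 htn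
    refine h _ fun hu => ?_
    have ht : (t : Fin n) = 0 := by linear_combination -hu
    exact absurd (Nat.eq_zero_of_dvd_of_lt (natCast_eq_zero.1 ht) htn) ht0.ne'
  · intro h v huv
    have := h (v - u).val (Nat.pos_of_ne_zero fun h0 => huv (sub_eq_zero.1 (Fin.ext h0)).symm)
      (v - u).isLt
    rwa [cast_val_eq_self, add_sub_cancel] at this

end Fin

@[simp] lemma walkWeight_copy {G : SimpleGraph V} (w : Sym2 V → ℝ) {u v u' v' : V}
    (p : G.Walk u v) (hu : u = u') (hv : v = v') :
    walkWeight w (p.copy hu hv) = walkWeight w p := by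
  simp [walkWeight]

namespace SimpleGraph

lemma Walk.IsPath.eq_of_isPath {G : SimpleGraph V} {u : V} {Q R : G.Walk u u} (hQ : Q.IsPath)
    (hR : R.IsPath) : Q = R :=
  (isPath_iff_nil.1 hQ).eq_nil.trans (isPath_iff_nil.1 hR).eq_nil.symm

section StepWalk

variable {α : Type*} [AddMonoid α] {G : SimpleGraph α} {d : α}

def stepWalk (hd : ∀ x, G.Adj x (x + d)) (u : α) : (k : ℕ) → G.Walk u (u + k • d)
  | 0 => Walk.nil.copy rfl (by simp)
  | k + 1 => (Walk.cons (hd u) (stepWalk hd (u + d) k)).copy rfl (by rw [add_assoc, succ_nsmul'])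

variable (hd : ∀ x, G.Adj x (x + d))

lemma support_stepWalk (u : α) (k : ℕ) :
    (stepWalk hd u k).support = (List.range (k + 1)).map (fun i => u + i • d) := by
  induction k generalizing u with
  | zero => simp [stepWalk]
  | succ k ih =>
    rw [stepWalk, Walk.support_copy, Walk.support_cons, ih, List.range_succ_eq_map (n := k + 1)]
    simp [Function.comp_def, succ_nsmul', add_assoc]

lemma edges_stepWalk (u : α) (k : ℕ) :
    (stepWalk hd u k).edges = (List.range k).map (fun i => s(u + i • d, u + (i + 1) • d)) := by
  induction k generalizing u with
  | zero => simp [stepWalk]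
  | succ k ih =>
    rw [stepWalk, Walk.edges_copy, Walk.edges_cons, ih, List.range_succ_eq_map (n := k)]
    simp [Function.comp_def, succ_nsmul', add_assoc]

lemma getVert_one_stepWalk (u : α) {k : ℕ} (hk : 0 < k) : (stepWalk hd u k).getVert 1 = u + d := by
  obtain ⟨k, rfl⟩ := Nat.exists_eq_add_of_lt hk
  simp [stepWalk, Walk.getVert_copy]

lemma mem_support_stepWalk (u : α) {i k : ℕ} (hi : i ≤ k) :
    u + i • d ∈ (stepWalk hd u k).support := by
  rw [support_stepWalk]
  exact List.mem_map.2 ⟨i, List.mem_range.2 (by omega), rfl⟩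

lemma isPath_stepWalk [IsLeftCancelAdd α] (u : α) {k : ℕ}
    (hinj : ∀ i ≤ k, ∀ j ≤ k, i • d = j • d → i = j) : (stepWalk hd u k).IsPath := by
  rw [Walk.isPath_def, support_stepWalk]
  refine List.Nodup.map_on (fun i hi j hj hij => ?_) List.nodup_range
  simp only [List.mem_range] at hi hj
  exact hinj i (by omega) j (by omega) (add_left_cancel hij)

lemma walkWeight_stepWalk (w : Sym2 α → ℝ) (u : α) (k : ℕ) :
    walkWeight w (stepWalk hd u k) = ∑ i ∈ range k, w s(u + i • d, u + (i + 1) • d) := by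
  rw [walkWeight, edges_stepWalk, List.map_map]
  rfl

end StepWalk

namespace cycleGraph

variable {n : ℕ} [NeZero n]

lemma adj_iff_exists_eq_add (hn : 2 ≤ n) {u v : Fin n} :
    (cycleGraph n).Adj u v ↔ ∃ d, (d = 1 ∨ d = -1) ∧ v = u + d := by
  have hval : ∀ x : Fin n, x.val = 1 ↔ x = 1 := fun x => by
    rw [Fin.ext_iff, Fin.val_one', Nat.mod_eq_of_lt (by omega)]
  rw [cycleGraph_adj', hval, hval]
  constructor
  · rintro (h | h)
    · exact ⟨-1, Or.inr rfl, by rw [← h]; ring⟩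
    · exact ⟨1, Or.inl rfl, by rw [← h]; ring⟩
  · rintro ⟨d, rfl | rfl, rfl⟩
    · right; ring
    · left; ring

lemma adj_add (hn : 2 ≤ n) {d : Fin n} (hd : d = 1 ∨ d = -1) (u : Fin n) :
    (cycleGraph n).Adj u (u + d) :=
  (adj_iff_exists_eq_add hn).2 ⟨d, hd, rfl⟩

lemma isPath_stepWalk (hn : 2 ≤ n) {d : Fin n} (hd : d = 1 ∨ d = -1) (u : Fin n) {k : ℕ}
    (hk : k < n) : (stepWalk (adj_add hn hd) u k).IsPath :=
  SimpleGraph.isPath_stepWalk _ u fun _ hi _ hj => Fin.eq_of_nsmul_eq_nsmul hd (by omega) (by omega)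

theorem exists_eq_copy_stepWalk_of_isPath (hn : 2 ≤ n) {u v : Fin n}
    (Q : (cycleGraph n).Walk u v) (hQ : Q.IsPath) :
    ∃ d, ∃ hd : d = 1 ∨ d = -1, ∃ k < n, ∃ h : u + k • d = v,
      Q = (stepWalk (adj_add hn hd) u k).copy rfl h := by
  induction Q with
  | nil => exact ⟨1, Or.inl rfl, 0, by omega, by simp, by simp [stepWalk]⟩
  | @cons u x v hadj q ih =>
    obtain ⟨hq, hu⟩ := Walk.cons_isPath_iff _ _ |>.1 hQ
    obtain ⟨d, hd, k, hk, rfl, rfl⟩ := ih hq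
    obtain ⟨d', hd', rfl⟩ := (adj_iff_exists_eq_add hn).1 hadj
    rw [Walk.copy_rfl_rfl] at hu ⊢
    rcases Nat.eq_zero_or_pos k with rfl | hk0
    · exact ⟨d', hd', 1, by omega, by simp, by simp [stepWalk]⟩
    have hdd : d = d' ∨ d' + d = 0 := by
      rcases hd with rfl | rfl <;> rcases hd' with rfl | rfl <;> simp
    rcases hdd with rfl | hdd
    · refine ⟨d, hd, k + 1, ?_, by rw [add_assoc, succ_nsmul'], by simp [stepWalk]⟩
      by_contra hkn
      apply hu
      convert mem_support_stepWalk _ (u + d) (le_refl k) using 1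
      rw [add_assoc, ← succ_nsmul', show k + 1 = n by omega, nsmul_eq_mul, Fin.natCast_self,
        zero_mul, add_zero]
    · have hmem := mem_support_stepWalk (adj_add hn hd) (u + d') (i := 1) hk0
      rw [one_nsmul, show u + d' + d = u by rw [add_assoc, hdd, add_zero]] at hmem
      exact absurd hmem hu

def arcWeight (w : Sym2 (Fin n) → ℝ) (u : Fin n) (k : ℕ) : ℝ :=
  ∑ i ∈ range k, w s(u + i, u + i + 1)

lemma arcWeight_zero (w : Sym2 (Fin n) → ℝ) (u : Fin n) : arcWeight w u 0 = 0 :=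
  sum_range_zero _

lemma arcWeight_succ (w : Sym2 (Fin n) → ℝ) (u : Fin n) (k : ℕ) :
    arcWeight w u (k + 1) = arcWeight w u k + w s(u + k, u + k + 1) :=
  sum_range_succ _ _

lemma arcWeight_mono {w : Sym2 (Fin n) → ℝ} (hw : ∀ e, 0 ≤ w e) (u : Fin n) :
    Monotone (arcWeight w u) := fun _ _ hkl =>
  sum_le_sum_of_subset_of_nonneg (range_mono hkl) fun _ _ _ => hw _

section UnitSteps

variable (hd : ∀ x, (cycleGraph n).Adj x (x + 1)) (hd' : ∀ x, (cycleGraph n).Adj x (x + -1))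
  (w : Sym2 (Fin n) → ℝ) (u : Fin n)

lemma walkWeight_stepWalk_one (k : ℕ) : walkWeight w (stepWalk hd u k) = arcWeight w u k := by
  simp [walkWeight_stepWalk, arcWeight, add_assoc]

lemma walkWeight_stepWalk_neg_one {k : ℕ} (hk : k ≤ n) :
    walkWeight w (stepWalk hd' u k) = arcWeight w u n - arcWeight w u (n - k) := by
  have hsplit : arcWeight w u n = arcWeight w u (n - k) +
      ∑ j ∈ range k, w s(u + (n - k + j : ℕ), u + (n - k + j : ℕ) + 1) := by
    rw [arcWeight, arcWeight, ← sum_range_add, Nat.sub_add_cancel hk]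
  rw [hsplit, add_sub_cancel_left, walkWeight_stepWalk, ← sum_range_reflect]
  refine sum_congr rfl fun j hj => ?_
  have hcast : ((n - k + j : ℕ) : Fin n) + (k - 1 - j : ℕ) + 1 = 0 := by
    rw [← Nat.cast_add, ← Nat.cast_add_one, show n - k + j + (k - 1 - j) + 1 = n by
      rw [mem_range] at hj; omega, Fin.natCast_self]
  rw [Sym2.eq_swap]
  congr 2 <;> simp only [smul_neg, nsmul_one, Nat.cast_add_one] <;> linear_combination -hcast

lemma mk_mem_edges_stepWalk_one {i k : ℕ} (hi : i < k) :
    s(u + i, u + i + 1) ∈ (stepWalk hd u k).edges := by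
  rw [edges_stepWalk]
  exact List.mem_map.2 ⟨i, mem_range.2 hi, by simp [add_assoc]⟩

lemma mk_mem_edges_stepWalk_neg_one {i k : ℕ} (hik : n - k ≤ i) (hi : i < n) :
    s(u + i, u + i + 1) ∈ (stepWalk hd' u k).edges := by
  rw [edges_stepWalk]
  refine List.mem_map.2 ⟨n - 1 - i, mem_range.2 (by omega), ?_⟩
  have hcast : (i : Fin n) + (n - 1 - i : ℕ) + 1 = 0 := by
    rw [← Nat.cast_add, ← Nat.cast_add_one, show i + (n - 1 - i) + 1 = n by omega,
      Fin.natCast_self]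
  rw [Sym2.eq_swap]
  congr 1 <;> simp only [smul_neg, nsmul_one, Nat.cast_add_one] <;> linear_combination -hcast

end UnitSteps

lemma walkWeight_add_walkWeight_of_ne (hn : 2 ≤ n) (w : Sym2 (Fin n) → ℝ) {u v : Fin n}
    {Q R : (cycleGraph n).Walk u v} (hQ : Q.IsPath) (hR : R.IsPath) (hQR : Q ≠ R) :
    walkWeight w Q + walkWeight w R = arcWeight w u n := by
  rcases eq_or_ne u v with rfl | huv
  · exact absurd (hQ.eq_of_isPath hR) hQR
  obtain ⟨d, hd, k, hk, rfl, rfl⟩ := exists_eq_copy_stepWalk_of_isPath hn Q hQ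
  obtain ⟨d', hd', k', hk', h, rfl⟩ := exists_eq_copy_stepWalk_of_isPath hn R hR
  have hk0 : k ≠ 0 := by rintro rfl; simp at huv
  have hdd : d ≠ d' := by
    rintro rfl
    obtain rfl := Fin.eq_of_nsmul_eq_nsmul hd hk hk' (add_left_cancel h).symm
    exact hQR rfl
  have hsum : ∀ {i j : ℕ}, i < n → j < n → i + j ≠ 0 → u + i • (1 : Fin n) = u + j • (-1) →
      arcWeight w u i + (arcWeight w u n - arcWeight w u (n - j)) = arcWeight w u n := by
    intro i j hi hj hij h
    have hcast : (i : Fin n) + j = 0 := by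
      rw [smul_neg, nsmul_one, nsmul_one] at h
      linear_combination h
    rcases Fin.add_eq_zero_or_eq_of_natCast_add_natCast_eq_zero hi hj hcast with h0 | hijn
    · exact absurd h0 hij
    · rw [show n - j = i by omega]
      ring
  simp only [walkWeight_copy]
  rcases hd with rfl | rfl <;> rcases hd' with rfl | rfl
  · exact absurd rfl hdd
  · rw [walkWeight_stepWalk_one, walkWeight_stepWalk_neg_one _ _ _ hk'.le]
    exact hsum hk hk' (by omega) h.symm
  · rw [walkWeight_stepWalk_one, walkWeight_stepWalk_neg_one _ _ _ hk.le, add_comm]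
    exact hsum hk' hk (by omega) h
  · exact absurd rfl hdd

lemma exists_isPath_ne (hn : 3 ≤ n) {u v : Fin n} (huv : u ≠ v) (Q : (cycleGraph n).Walk u v) :
    ∃ R : (cycleGraph n).Walk u v, R.IsPath ∧ R ≠ Q := by
  have hn2 : 2 ≤ n := by omega
  set k := (v - u).val
  have hk0 : 0 < k := Nat.pos_of_ne_zero fun h => huv (sub_eq_zero.1 (Fin.ext h)).symm
  have hk : k < n := (v - u).isLt
  have hF : u + k • (1 : Fin n) = v := by rw [nsmul_one, Fin.cast_val_eq_self]; ring
  have hB : u + (n - k) • (-1 : Fin n) = v := by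
    rw [smul_neg, nsmul_one, Nat.cast_sub hk.le, Fin.natCast_self, Fin.cast_val_eq_self]; ring
  set F := (stepWalk (adj_add hn2 (Or.inl rfl)) u k).copy rfl hF
  set B := (stepWalk (adj_add hn2 (Or.inr rfl)) u (n - k)).copy rfl hB
  have hFB : F ≠ B := fun h => by
    have h1 := congrArg (Walk.getVert · 1) h
    simp only [F, B, Walk.getVert_copy, getVert_one_stepWalk _ _ hk0,
      getVert_one_stepWalk _ _ (Nat.sub_pos_of_lt hk)] at h1
    have : Fact (2 < n) := ⟨hn⟩
    exact CharP.neg_one_ne_one (Fin n) n (add_left_cancel h1).symm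
  by_cases hFQ : F = Q
  · exact ⟨B, (Walk.isPath_copy _ _ _).2 (isPath_stepWalk hn2 (Or.inr rfl) u (by omega)),
      hFQ ▸ hFB.symm⟩
  · exact ⟨F, (Walk.isPath_copy _ _ _).2 (isPath_stepWalk hn2 (Or.inl rfl) u hk), hFQ⟩

theorem strictlyInduces_iff (hn : 3 ≤ n) {w : Sym2 (Fin n) → ℝ}
    {P : ∀ u v : Fin n, (cycleGraph n).Walk u v} (hP : IsPathSystem (cycleGraph n) P) :
    StrictlyInduces (cycleGraph n) w P ↔
      ∀ u v, u ≠ v → 2 * walkWeight w (P u v) < arcWeight w u n := by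
  constructor
  · intro h u v huv
    obtain ⟨R, hR, hRP⟩ := exists_isPath_ne hn huv (P u v)
    have := walkWeight_add_walkWeight_of_ne (by omega) w (hP u v) hR hRP.symm
    linarith [h u v R hR hRP]
  · intro h u v Q hQ hQP
    rcases eq_or_ne u v with rfl | huv
    · exact absurd (hQ.eq_of_isPath (hP u u)) hQP
    have := walkWeight_add_walkWeight_of_ne (by omega) w (hP u v) hQ (Ne.symm hQP)
    linarith [h u v huv]

lemma exists_eq_mk_add_of_mem_edgeSet (hn : 2 ≤ n) {e : Sym2 (Fin n)}
    (he : e ∈ (cycleGraph n).edgeSet) (u : Fin n) :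
    ∃ α < n, e = s(u + α, u + α + 1) := by
  induction e using Sym2.ind with
  | h c d =>
    rw [mem_edgeSet, adj_iff_exists_eq_add hn] at he
    obtain ⟨δ, rfl | rfl, rfl⟩ := he
    · exact ⟨(c - u).val, (c - u).isLt, by simp [Fin.cast_val_eq_self]⟩
    · refine ⟨(c - 1 - u).val, (c - 1 - u).isLt, ?_⟩
      rw [Fin.cast_val_eq_self, Sym2.eq_swap]
      simp [sub_eq_add_neg]

lemma walkWeight_eq_ite_of_notMem_edges (hn : 2 ≤ n) (w : Sym2 (Fin n) → ℝ) {u : Fin n}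
    {t α : ℕ} (ht : t ≤ n) (hα : α < n) {Q : (cycleGraph n).Walk u (u + t)} (hQ : Q.IsPath)
    (hQα : s(u + α, u + α + 1) ∉ Q.edges) :
    walkWeight w Q = if t ≤ α then arcWeight w u t else arcWeight w u n - arcWeight w u t := by
  rcases ht.lt_or_eq with ht | htn
  swap
  · have hnil : ∀ {v} (R : (cycleGraph n).Walk u v), v = u → R.IsPath → walkWeight w R = 0 := by
      rintro v R rfl hR
      rw [(Walk.isPath_iff_nil.1 hR).eq_nil]
      rfl
    rw [hnil Q (by rw [htn, Fin.natCast_self, add_zero]) hQ, if_neg (by omega), htn, sub_self]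
  obtain ⟨d, hd, k, hk, h, rfl⟩ := exists_eq_copy_stepWalk_of_isPath hn Q hQ
  rw [Walk.edges_copy] at hQα
  rw [walkWeight_copy]
  rcases hd with rfl | rfl
  · obtain rfl : k = t := CharP.natCast_injOn_Iio (Fin n) n hk ht (by simpa using h)
    rw [walkWeight_stepWalk_one,
      if_pos (not_lt.1 fun hαk => hQα (mk_mem_edges_stepWalk_one _ _ hαk))]
  · rw [walkWeight_stepWalk_neg_one _ _ _ hk.le]
    have hcast : (t : Fin n) + k = 0 := by
      rw [smul_neg, nsmul_one] at h
      linear_combination -h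
    rcases Fin.add_eq_zero_or_eq_of_natCast_add_natCast_eq_zero ht hk hcast with h0 | htk
    · obtain ⟨rfl, rfl⟩ : t = 0 ∧ k = 0 := by omega
      simp [arcWeight_zero]
    · rw [show n - k = t by omega,
        if_neg fun htα => hQα (mk_mem_edges_stepWalk_neg_one _ _ (by omega) hα)]

end cycleGraph

end SimpleGraph

/-- Read `p t` as the weight of the chosen path from `x` to `x + t` when the crossing edge of `x`
is the `α`-th edge of the cycle: the largest of these weights is attained at `t = α` or
`t = α + 1`. -/
lemma forall_two_mul_lt_iff_abs_sub_lt {S p : ℕ → ℝ} {n α : ℕ} (hS : Monotone S) (hS0 : S 0 = 0)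
    (hn : 2 ≤ n) (hα : α < n) (hp : ∀ t ≤ n, p t = if t ≤ α then S t else S n - S t) :
    (∀ t, 0 < t → t < n → 2 * p t < S n) ↔ |p α - p (α + 1)| < S (α + 1) - S α := by
  have hpα : p α = S α := by rw [hp α hα.le, if_pos le_rfl]
  rw [hpα, hp (α + 1) hα, if_neg (by omega), abs_sub_lt_iff]
  have hSα : 0 ≤ S α := hS0 ▸ hS (Nat.zero_le α)
  constructor
  · intro h
    constructor
    · rcases Nat.eq_zero_or_pos α with rfl | hα0
      · have h1 := h 1 one_pos (by omega)
        rw [hp 1 (by omega), if_neg (by omega)] at h1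
        linarith [hS (show 1 ≤ n by omega)]
      · linarith [hpα ▸ h α hα0 hα]
    · rcases (Nat.succ_le_of_lt hα).lt_or_eq with hα1 | hα1
      · have h1 := h (α + 1) (by omega) hα1
        rw [hp _ hα1.le, if_neg (by omega)] at h1
        linarith
      · rw [Nat.succ_eq_add_one] at hα1
        rw [hα1]
        linarith [hpα ▸ h α (by omega) hα]
  · rintro ⟨h1, h2⟩ t ht0 htn
    rw [hp t htn.le]
    split_ifs with htα
    · linarith [hS htα]
    · linarith [hS (show α + 1 ≤ t by omega)]

theorem cycle_strict_inducing_characterization_general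
    (n : ℕ) (hn : 3 ≤ n)
    (P : ∀ u v : Fin n, (cycleGraph n).Walk u v)
    (hP : IsPathSystem (cycleGraph n) P)
    (f : Fin n → Sym2 (Fin n))
    (hf : ∀ x, f x ∈ (cycleGraph n).edgeSet ∧ ∀ v, f x ∉ (P x v).edges)
    (w : Sym2 (Fin n) → ℝ) (hw : ∀ e, 0 ≤ w e) :
    StrictlyInduces (cycleGraph n) w P ↔
      ∀ (x a b : Fin n), f x = s(a, b) →
        |walkWeight w (P x a) - walkWeight w (P x b)| < w s(a, b) := by
  have : NeZero n := ⟨by omega⟩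
  rw [cycleGraph.strictlyInduces_iff hn hP]
  refine forall_congr' fun x => ?_
  obtain ⟨α, hα, hfx⟩ := cycleGraph.exists_eq_mk_add_of_mem_edgeSet (by omega) (hf x).1 x
  have hweight (t : ℕ) (ht : t ≤ n) :=
    cycleGraph.walkWeight_eq_ite_of_notMem_edges (by omega) w ht hα (hP x (x + t))
      (hfx ▸ (hf x).2 _)
  rw [Fin.forall_ne_iff_forall_add_natCast, forall_two_mul_lt_iff_abs_sub_lt
    (cycleGraph.arcWeight_mono hw x) (cycleGraph.arcWeight_zero w x) (by omega) hα hweight,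
    cycleGraph.arcWeight_succ, add_sub_cancel_left, Nat.cast_succ, ← add_assoc]
  refine ⟨fun h a b hab => ?_, fun h => h _ _ hfx⟩
  rcases Sym2.eq_iff.1 (hab.symm.trans hfx) with ⟨rfl, rfl⟩ | ⟨rfl, rfl⟩
  · exact h
  · rwa [abs_sub_comm, Sym2.eq_swap]

/-- for a consistent path system in `C_n` with crossing function `f`,
a nonnegative weight function `w` strictly induces the system iff for every vertex
`x` with `f x = s(a,b)` one has `|w(P x a) - w(P x b)| < w(s(a,b))`. -/
theorem cycle_strict_inducing_characterization
    (n : ℕ) (hn : 3 ≤ n)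
    (P : ∀ u v : Fin n, (cycleGraph n).Walk u v)
    (hP : IsPathSystem (cycleGraph n) P) (hcons : Consistent (cycleGraph n) P)
    (f : Fin n → Sym2 (Fin n))
    (hf : ∀ x, f x ∈ (cycleGraph n).edgeSet ∧ ∀ v, f x ∉ (P x v).edges)
    (w : Sym2 (Fin n) → ℝ) (hw : ∀ e, 0 ≤ w e) :
    StrictlyInduces (cycleGraph n) w P ↔
      ∀ (x a b : Fin n), f x = s(a, b) →
        |walkWeight w (P x a) - walkWeight w (P x b)| < w s(a, b) :=
  cycle_strict_inducing_characterization_general n hn P hP f hf w hw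
end
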